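/- With the notation of Construction 2, for (c,α) ≠ (e,δ), the extended sets S'_{c,α} and S'_{e,δ} (built from G = H + F with H vectorial bent) are orthogonal to each other if and only if the original sets S_{c,α} and S_{e,δ} (built from F) are orthogonal to each other. -/
import Mathlib


open Finset

/-- mod-2 inner product on `F_2^n`. -/
def dotp {n : ℕ} (a b : Fin n → ZMod 2) : ZMod 2 := ∑ i, a i * b i

/-- `(-1)^v` for `v ∈ F_2`. -/
def sgn (v : ZMod 2) : ℤ := (-1 : ℤ) ^ v.val

/-- Integer inner product of the ±1-sequences of two Boolean functions on F_2^s × F_2^t. -/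
def seqInnerP {s t : ℕ} (f g : (Fin s → ZMod 2) × (Fin t → ZMod 2) → ZMod 2) : ℤ :=
  ∑ p : (Fin s → ZMod 2) × (Fin t → ZMod 2), sgn (f p) * sgn (g p)

/-- Integer inner product of the ±1-sequences of two Boolean functions on
F_2^u × (F_2^s × F_2^t). -/
def seqInner3 {u s t : ℕ}
    (f g : (Fin u → ZMod 2) × ((Fin s → ZMod 2) × (Fin t → ZMod 2)) → ZMod 2) : ℤ :=
  ∑ p : (Fin u → ZMod 2) × ((Fin s → ZMod 2) × (Fin t → ZMod 2)), sgn (f p) * sgn (g p)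

/-- Walsh transform of a function on F_2^u × (F_2^s × F_2^t). -/
def walsh3 {u s t : ℕ}
    (f : (Fin u → ZMod 2) × ((Fin s → ZMod 2) × (Fin t → ZMod 2)) → ZMod 2)
    (a : Fin u → ZMod 2) (b : Fin s → ZMod 2) (w : Fin t → ZMod 2) : ℤ :=
  ∑ p : (Fin u → ZMod 2) × ((Fin s → ZMod 2) × (Fin t → ZMod 2)),
    sgn (f p + dotp a p.1 + dotp b p.2.1 + dotp w p.2.2)

/-- the integer `[y]` represented by the binary vector `y ∈ F_2^s`. -/
def intRep {s : ℕ} (y : Fin s → ZMod 2) : ℕ := ∑ j : Fin s, (y j).val * 2 ^ (j : ℕ)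

/-- Construction 1: the component function f_c = c·F, where
f_i(y,x) = π(γ^{[y]+i})·x for i = 1,…,t. -/
noncomputable def conF {s t : ℕ} (γ : GaloisField 2 t)
    (π : GaloisField 2 t ≃ₗ[ZMod 2] (Fin t → ZMod 2)) (c : Fin t → ZMod 2)
    (p : (Fin s → ZMod 2) × (Fin t → ZMod 2)) : ZMod 2 :=
  ∑ i : Fin t, c i * dotp (π (γ ^ (intRep p.1 + (i : ℕ) + 1))) p.2

/-- Construction 2: the extended function g_c + l' = c·H + c·F + l'_{(a,β),α}. -/
noncomputable def extFn {u s t : ℕ} (γ : GaloisField 2 t)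
    (π : GaloisField 2 t ≃ₗ[ZMod 2] (Fin t → ZMod 2))
    (H : (Fin u → ZMod 2) → (Fin t → ZMod 2)) (c : Fin t → ZMod 2)
    (a : Fin u → ZMod 2) (β : Fin s → ZMod 2) (α : Fin t → ZMod 2)
    (p : (Fin u → ZMod 2) × ((Fin s → ZMod 2) × (Fin t → ZMod 2))) : ZMod 2 :=
  (∑ i, c i * H p.1 i) + conF γ π c p.2 + dotp a p.1 + dotp β p.2.1 + dotp α p.2.2

/-- Construction 1: the function f_c + l_{β,α}. -/
noncomputable def origFn {s t : ℕ} (γ : GaloisField 2 t)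
    (π : GaloisField 2 t ≃ₗ[ZMod 2] (Fin t → ZMod 2)) (c : Fin t → ZMod 2)
    (β : Fin s → ZMod 2) (α : Fin t → ZMod 2)
    (p : (Fin s → ZMod 2) × (Fin t → ZMod 2)) : ZMod 2 :=
  conF γ π c p + dotp β p.1 + dotp α p.2

lemma sgn_add (v w : ZMod 2) : sgn (v + w) = sgn v * sgn w := by
  revert v w; decide

lemma dotp_add_left {n : ℕ} (a b z : Fin n → ZMod 2) :
    dotp (a + b) z = dotp a z + dotp b z := by
  simp [dotp, add_mul, Finset.sum_add_distrib]

lemma key_factor {u s t : ℕ} (γ : GaloisField 2 t)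
    (π : GaloisField 2 t ≃ₗ[ZMod 2] (Fin t → ZMod 2))
    (H : (Fin u → ZMod 2) → (Fin t → ZMod 2))
    (c e : Fin t → ZMod 2) (a a' : Fin u → ZMod 2)
    (β θ : Fin s → ZMod 2) (α δ : Fin t → ZMod 2) :
    seqInner3 (extFn γ π H c a β α) (extFn γ π H e a' θ δ) =
    (∑ z : Fin u → ZMod 2, sgn ((∑ i, (c + e) i * H z i) + dotp (a + a') z)) *
    seqInnerP (origFn γ π c β α) (origFn γ π e θ δ) := by
  unfold seqInner3 seqInnerP extFn origFn
  rw [Fintype.sum_prod_type, Finset.sum_mul_sum]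
  refine Finset.sum_congr rfl fun z _ => Finset.sum_congr rfl fun p _ => ?_
  simp only [sgn_add, dotp_add_left, Pi.add_apply, add_mul, Finset.sum_add_distrib]
  ring

/-- for (c,α) ≠ (e,δ), the extended sets S'\''_{c,α}, S'\''_{e,δ} of
Construction 2 are orthogonal to each other iff the original sets S_{c,α},
S_{e,δ} of Construction 1 are orthogonal to each other. -/
theorem stmt_12 {m s t u : ℕ} (hm : m = s + t) (hst : s < t)
    (hu : Even u) (hut : 2 * t ≤ u)
    (γ : GaloisField 2 t) (hγ : ∀ z : GaloisField 2 t, z ≠ 0 → ∃ n : ℕ, γ ^ n = z)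
    (π : GaloisField 2 t ≃ₗ[ZMod 2] (Fin t → ZMod 2))
    (H : (Fin u → ZMod 2) → (Fin t → ZMod 2))
    (hH : ∀ c : Fin t → ZMod 2, c ≠ 0 → ∀ a : Fin u → ZMod 2,
      (∑ z : Fin u → ZMod 2, sgn ((∑ i, c i * H z i) + dotp a z)) = 2 ^ (u / 2) ∨
      (∑ z : Fin u → ZMod 2, sgn ((∑ i, c i * H z i) + dotp a z)) = -(2 ^ (u / 2)))
    (c e α δ : Fin t → ZMod 2) (hne : (c, α) ≠ (e, δ)) :
    (∀ (a a' : Fin u → ZMod 2) (β θ : Fin s → ZMod 2),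
        seqInner3 (extFn γ π H c a β α) (extFn γ π H e a' θ δ) = 0) ↔
    (∀ β θ : Fin s → ZMod 2,
        seqInnerP (origFn γ π c β α) (origFn γ π e θ δ) = 0) := by
  constructor
  · intro h β θ
    have h0 := h 0 0 β θ
    rw [key_factor] at h0
    rcases mul_eq_zero.mp h0 with hf | hp
    · exfalso
      by_cases hc : c = e
      · have hce : c + e = 0 := by
          subst hc
          funext i
          exact (by decide : ∀ x : ZMod 2, x + x = 0) (c i)
        rw [hce] at hf
        simp [sgn, dotp, Finset.card_univ] at hf
      · have hce : c + e ≠ 0 := by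
          intro hz
          apply hc
          funext i
          have := congrFun hz i
          revert this
          exact (by decide : ∀ x y : ZMod 2, x + y = 0 → x = y) _ _
        have hz0 : (0 : Fin u → ZMod 2) + 0 = 0 := by simp
        rw [hz0] at hf
        rcases hH (c + e) hce 0 with h1 | h1 <;> rw [hf] at h1
        · exact absurd h1.symm (by positivity)
        · have : (0:ℤ) < 2 ^ (u / 2) := by positivity
          omega
    · exact hp
  · intro h a a' β θ
    rw [key_factor, h β θ, mul_zero]
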